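/- Let Γ ⊆ ℝⁿ be an n-attractor with defining IFS s₁,…,s_M. Then the open set condition holds with O = int Γ: int Γ is a non-empty bounded open set, ⋃_{m=1}^M s_m(int Γ) ⊆ int Γ, and s_m(int Γ) ∩ s_{m'}(int Γ) = ∅ for all m ≠ m'. -/

import Mathlib

/-!
A similarity of ratio `ρ` scales Lebesgue measure by `ρⁿ`, so `∑ ρₘⁿ = 1` makes the Hutchinson
operator `T A = ⋃ₘ sₘ(A)` preserve the measure of every open `A ⊆ O`, where `O` is an OSC set.
Hence the iterates `Tᵏ(O) ⊆ O` all have the measure of `O`, while they shrink geometrically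
onto `Γ`; so `O \ Γ` is an open null set, i.e. empty, and `O ⊆ int Γ`. The same count applied to
`Γ = T Γ` shows that the pieces `sₘ(Γ)` overlap in null sets only, which forces the open sets
`sₘ(int Γ)` to be pairwise disjoint.
-/

open Metric MeasureTheory Set Function Filter Topology Module
open scoped ENNReal Pointwise

theorem exists_nonneg_lt_one_forall_le {ι : Type*} [Finite ι] {ρ : ι → ℝ} (h : ∀ i, ρ i < 1) :
    ∃ r, 0 ≤ r ∧ r < 1 ∧ ∀ i, ρ i ≤ r := by
  obtain ⟨r, ⟨hr₀, hρr⟩, hr₁⟩ :=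
    ((eventually_ge_nhds zero_lt_one).and (eventually_all.2 fun i => eventually_ge_nhds (h i))
      |>.filter_mono nhdsWithin_le_nhds |>.and self_mem_nhdsWithin).exists (f := 𝓝[<] (1 : ℝ))
  exact ⟨r, hr₀, hr₁, hρr⟩

section Similarity

theorem continuous_of_dist_eq_mul {X Y : Type*} [PseudoMetricSpace X] [PseudoMetricSpace Y]
    {f : X → Y} {ρ : ℝ} (hρ : 0 ≤ ρ) (hf : ∀ x y, dist (f x) (f y) = ρ * dist x y) :
    Continuous f :=
  (LipschitzWith.of_dist_le_mul (K := ρ.toNNReal) fun x y => by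
    rw [Real.coe_toNNReal _ hρ, hf]).continuous

variable {E : Type*} [NormedAddCommGroup E] [NormedSpace ℝ E] {f : E → E} {ρ : ℝ}

theorem isometry_inv_smul_of_dist_eq_mul (hρ : 0 < ρ)
    (hf : ∀ x y, dist (f x) (f y) = ρ * dist x y) : Isometry fun x => ρ⁻¹ • f x :=
  Isometry.of_dist_eq fun x y => by
    rw [dist_smul₀, hf, Real.norm_eq_abs, abs_of_pos (inv_pos.2 hρ), inv_mul_cancel_left₀ hρ.ne']

theorem Isometry.surjective_of_finiteDimensional [StrictConvexSpace ℝ E] [FiniteDimensional ℝ E]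
    {g : E → E} (hg : Isometry g) : Surjective g :=
  let A := hg.affineIsometryOfStrictConvexSpace
  A.toAffineMap.linear_surjective_iff.1 <|
    LinearMap.injective_iff_surjective.1 A.linearIsometry.injective

theorem isOpenMap_of_dist_eq_mul [StrictConvexSpace ℝ E] [FiniteDimensional ℝ E] (hρ : 0 < ρ)
    (hf : ∀ x y, dist (f x) (f y) = ρ * dist x y) : IsOpenMap f := by
  have hg := isometry_inv_smul_of_dist_eq_mul hρ hf
  have hf_eq : f = fun x => ρ • ρ⁻¹ • f x := funext fun x => (smul_inv_smul₀ hρ.ne' _).symm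
  rw [hf_eq]
  exact (isOpenMap_smul₀ hρ.ne').comp
    (hg.isEmbedding.isOpenEmbedding_of_surjective hg.surjective_of_finiteDimensional).isOpenMap

theorem volume_image_of_dist_eq_mul {V : Type*} [NormedAddCommGroup V] [InnerProductSpace ℝ V]
    [FiniteDimensional ℝ V] [MeasurableSpace V] [BorelSpace V] {f : V → V} {ρ : ℝ} (hρ : 0 < ρ)
    (hf : ∀ x y, dist (f x) (f y) = ρ * dist x y) (S : Set V) :
    volume (f '' S) = ENNReal.ofReal (ρ ^ finrank ℝ V) * volume S := by
  have hg := isometry_inv_smul_of_dist_eq_mul hρ hf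
  have hS : f '' S = ρ • (fun x => ρ⁻¹ • f x) '' S := by
    rw [← image_smul, image_image]
    simp_rw [smul_inv_smul₀ hρ.ne']
  rw [hS, Measure.addHaar_smul_of_nonneg _ hρ.le,
    ← InnerProductSpace.euclideanHausdorffMeasure_eq_volume, hg.euclideanHausdorffMeasure_image]

end Similarity

theorem MeasureTheory.pairwise_aedisjoint_of_sum_measure_le {α ι : Type*} [MeasurableSpace α]
    {μ : Measure α} [Fintype ι] {A : ι → Set α} (hA : ∀ i, NullMeasurableSet (A i) μ)
    (hfin : μ (⋃ i, A i) ≠ ∞) (hsum : ∑ i, μ (A i) ≤ μ (⋃ i, A i)) :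
    Pairwise (AEDisjoint μ on A) := by
  classical
  intro i j hij
  let rest : Finset ι := {i, j}ᶜ
  have hcover : ⋃ k, A k ⊆ (A i ∪ A j) ∪ ⋃ k ∈ rest, A k := by
    refine iUnion_subset fun k => ?_
    by_cases hk : k ∈ ({i, j} : Finset ι)
    · rw [Finset.mem_insert, Finset.mem_singleton] at hk
      rcases hk with rfl | rfl
      exacts [subset_union_left.trans subset_union_left, subset_union_right.trans subset_union_left]
    · exact (subset_biUnion_of_mem (u := A) (Finset.mem_compl.2 hk)).trans subset_union_right
  have hle : μ (⋃ k, A k) + μ (A i ∩ A j) ≤ μ (⋃ k, A k) + 0 :=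
    calc μ (⋃ k, A k) + μ (A i ∩ A j)
        ≤ μ (A i ∪ A j) + ∑ k ∈ rest, μ (A k) + μ (A i ∩ A j) := by
          gcongr
          exact (measure_mono hcover).trans
            ((measure_union_le _ _).trans (by gcongr; exact measure_biUnion_finset_le _ _))
      _ = ∑ k ∈ {i, j}, μ (A k) + ∑ k ∈ rest, μ (A k) := by
          rw [add_right_comm, measure_union_add_inter₀ _ (hA j), Finset.sum_pair hij]
      _ ≤ μ (⋃ k, A k) + 0 := by rw [Finset.sum_add_sum_compl, add_zero]; exact hsum
  exact nonpos_iff_eq_zero.1 ((ENNReal.add_le_add_iff_left hfin).1 hle)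

section Hutchinson

variable {ι X : Type*} {s : ι → X → X} {A O Γ : Set X}

def hutchinson (s : ι → X → X) (A : Set X) : Set X :=
  ⋃ i, s i '' A

theorem hutchinson_mono (s : ι → X → X) : Monotone (hutchinson s) :=
  fun _ _ h => iUnion_mono fun _ => image_mono h

theorem iterate_hutchinson_subset (hO : hutchinson s O ⊆ O) (k : ℕ) :
    (hutchinson s)^[k] O ⊆ O :=
  Iterate.rec (· ⊆ O) subset_rfl (fun _ hB => (hutchinson_mono s hB).trans hO) k

section Topology

variable [TopologicalSpace X]

theorem isOpen_hutchinson (hs : ∀ i, IsOpenMap (s i)) (hA : IsOpen A) : IsOpen (hutchinson s A) :=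
  isOpen_iUnion fun i => hs i _ hA

theorem isOpen_iterate_hutchinson (hs : ∀ i, IsOpenMap (s i)) (hA : IsOpen A) (k : ℕ) :
    IsOpen ((hutchinson s)^[k] A) :=
  Iterate.rec IsOpen hA (fun _ => isOpen_hutchinson hs) k

end Topology

section Metric

variable [PseudoMetricSpace X] {r δ : ℝ}

theorem iterate_hutchinson_subset_biUnion_closedBall (hr : 0 ≤ r)
    (hs : ∀ i x y, dist (s i x) (s i y) ≤ r * dist x y) (hΓ : hutchinson s Γ ⊆ Γ)
    (hA : A ⊆ ⋃ γ ∈ Γ, closedBall γ δ) (k : ℕ) :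
    (hutchinson s)^[k] A ⊆ ⋃ γ ∈ Γ, closedBall γ (r ^ k * δ) := by
  induction k with
  | zero => simpa using hA
  | succ k ih =>
    rw [iterate_succ_apply']
    rintro _ ⟨_, ⟨i, rfl⟩, x, hx, rfl⟩
    obtain ⟨γ, hγ, hxγ⟩ := mem_iUnion₂.1 (ih hx)
    refine mem_iUnion₂.2 ⟨s i γ, hΓ (mem_iUnion.2 ⟨i, mem_image_of_mem _ hγ⟩), ?_⟩
    calc dist (s i x) (s i γ) ≤ r * (r ^ k * δ) := (hs i x γ).trans (by gcongr; exact hxγ)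
      _ = r ^ (k + 1) * δ := by ring

theorem iInter_iterate_hutchinson_subset_closure (hr₀ : 0 ≤ r) (hr₁ : r < 1)
    (hs : ∀ i x y, dist (s i x) (s i y) ≤ r * dist x y) (hΓ : hutchinson s Γ ⊆ Γ)
    (hA : A ⊆ ⋃ γ ∈ Γ, closedBall γ δ) : ⋂ k, (hutchinson s)^[k] A ⊆ closure Γ := by
  intro x hx
  refine Metric.mem_closure_iff.2 fun ε hε => ?_
  have hlim : Tendsto (fun k => r ^ k * δ) atTop (𝓝 0) := by
    simpa using (tendsto_pow_atTop_nhds_zero_of_lt_one hr₀ hr₁).mul_const δ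
  obtain ⟨k, hk⟩ := (hlim.eventually (gt_mem_nhds hε)).exists
  obtain ⟨γ, hγ, hxγ⟩ :=
    mem_iUnion₂.1 (iterate_hutchinson_subset_biUnion_closedBall hr₀ hs hΓ hA k (mem_iInter.1 hx k))
  exact ⟨γ, hγ, (mem_closedBall.1 hxγ).trans_lt hk⟩

end Metric

section Measure

variable [MeasurableSpace X] {μ : Measure X} [Fintype ι] {c : ι → ℝ≥0∞}

theorem measure_hutchinson (hc : ∑ i, c i = 1) (hμ : ∀ i S, μ (s i '' S) = c i * μ S)
    (hA : ∀ i, MeasurableSet (s i '' A)) (hd : Pairwise (Disjoint on fun i => s i '' A)) :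
    μ (hutchinson s A) = μ A := by
  rw [hutchinson, measure_iUnion hd hA, tsum_fintype]
  simp_rw [hμ]
  rw [← Finset.sum_mul, hc, one_mul]

theorem pairwise_aedisjoint_image_of_hutchinson_eq (hc : ∑ i, c i = 1)
    (hμ : ∀ i S, μ (s i '' S) = c i * μ S) (hΓ : hutchinson s Γ = Γ) (hfin : μ Γ ≠ ∞)
    (hmeas : ∀ i, NullMeasurableSet (s i '' Γ) μ) :
    Pairwise (AEDisjoint μ on fun i => s i '' Γ) :=
  pairwise_aedisjoint_of_sum_measure_le hmeas (by rwa [← hutchinson, hΓ]) <| by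
    simp_rw [hμ]
    rw [← Finset.sum_mul, hc, one_mul, ← hutchinson, hΓ]

theorem measure_iterate_hutchinson [TopologicalSpace X] [OpensMeasurableSpace X]
    (hc : ∑ i, c i = 1) (hμ : ∀ i S, μ (s i '' S) = c i * μ S)
    (hs : ∀ i, IsOpenMap (s i)) (hO : IsOpen O) (hOsub : hutchinson s O ⊆ O)
    (hOd : Pairwise (Disjoint on fun i => s i '' O)) (k : ℕ) :
    μ ((hutchinson s)^[k] O) = μ O := by
  induction k with
  | zero => rfl
  | succ k ih =>
    have hsub := iterate_hutchinson_subset hOsub k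
    rw [iterate_succ_apply', measure_hutchinson hc hμ
      (fun i => (hs i _ (isOpen_iterate_hutchinson hs hO k)).measurableSet)
      (hOd.mono fun i j h => h.mono (image_mono hsub) (image_mono hsub)), ih]

theorem subset_of_openSetCondition [PseudoMetricSpace X] [OpensMeasurableSpace X]
    [μ.IsOpenPosMeasure] (hc : ∑ i, c i = 1) (hμ : ∀ i S, μ (s i '' S) = c i * μ S)
    (hs : ∀ i, IsOpenMap (s i)) {r : ℝ} (hr₀ : 0 ≤ r) (hr₁ : r < 1)
    (hlip : ∀ i x y, dist (s i x) (s i y) ≤ r * dist x y) (hΓ : IsClosed Γ) (hΓne : Γ.Nonempty)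
    (hsΓ : hutchinson s Γ ⊆ Γ) (hO : IsOpen O) (hObdd : Bornology.IsBounded O) (hOfin : μ O ≠ ∞)
    (hOsub : hutchinson s O ⊆ O) (hOd : Pairwise (Disjoint on fun i => s i '' O)) : O ⊆ Γ := by
  obtain ⟨z, hz⟩ := hΓne
  obtain ⟨R, hR⟩ := hObdd.subset_closedBall z
  have hlim : ⋂ k, (hutchinson s)^[k] O ⊆ Γ :=
    (iInter_iterate_hutchinson_subset_closure hr₀ hr₁ hlip hsΓ
      (hR.trans (subset_biUnion_of_mem (u := fun γ => closedBall γ R) hz))).trans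
      hΓ.closure_subset
  have hnull : μ (O \ ⋂ k, (hutchinson s)^[k] O) = 0 := by
    rw [sdiff_iInter]
    refine measure_iUnion_null fun k => ?_
    have hk := measure_iterate_hutchinson hc hμ hs hO hOsub hOd k
    rw [measure_sdiff (iterate_hutchinson_subset hOsub k)
      (isOpen_iterate_hutchinson hs hO k).measurableSet.nullMeasurableSet (hk ▸ hOfin), hk,
      tsub_self]
  have hOΓ : μ (O \ Γ) = 0 := measure_mono_null (sdiff_subset_sdiff_right hlim) hnull
  exact sdiff_eq_empty.1 (((hO.sdiff hΓ).measure_eq_zero_iff μ).1 hOΓ)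

end Measure

end Hutchinson

theorem MeasureTheory.AEDisjoint.disjoint_of_isOpen {X : Type*} [TopologicalSpace X]
    [MeasurableSpace X] {μ : Measure X} [μ.IsOpenPosMeasure] {U V : Set X} (h : AEDisjoint μ U V)
    (hU : IsOpen U) (hV : IsOpen V) : Disjoint U V :=
  disjoint_iff_inter_eq_empty.2 (((hU.inter hV).measure_eq_zero_iff μ).1 h)

theorem statement5_general
    (n : ℕ)
    (M : ℕ)
    (s : Fin M → EuclideanSpace ℝ (Fin n) → EuclideanSpace ℝ (Fin n))
    (ρ : Fin M → ℝ)
    (hρ : ∀ m, ρ m ∈ Set.Ioo (0 : ℝ) 1)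
    (hsim : ∀ m x y, dist (s m x) (s m y) = ρ m * dist x y)
    (Γ : Set (EuclideanSpace ℝ (Fin n)))
    (hΓne : Γ.Nonempty) (hΓcomp : IsCompact Γ)
    (hattr : Γ = ⋃ m, s m '' Γ)
    (hOSC : ∃ O : Set (EuclideanSpace ℝ (Fin n)), O.Nonempty ∧ IsOpen O ∧
      Bornology.IsBounded O ∧ (⋃ m, s m '' O) ⊆ O ∧
      ∀ m m', m ≠ m' → Disjoint (s m '' O) (s m' '' O))
    (hsum : ∑ m, ρ m ^ n = 1) :
    (interior Γ).Nonempty ∧ Bornology.IsBounded (interior Γ) ∧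
    (⋃ m, s m '' interior Γ) ⊆ interior Γ ∧
    ∀ m m' : Fin M, m ≠ m' → Disjoint (s m '' interior Γ) (s m' '' interior Γ) := by
  obtain ⟨O, hOne, hO, hObdd, hOsub, hOd⟩ := hOSC
  have hopen m : IsOpenMap (s m) := isOpenMap_of_dist_eq_mul (hρ m).1 (hsim m)
  have hvol m S : volume (s m '' S) = ENNReal.ofReal (ρ m ^ n) * volume S := by
    rw [volume_image_of_dist_eq_mul (hρ m).1 (hsim m), finrank_euclideanSpace_fin]
  have hc : ∑ m, ENNReal.ofReal (ρ m ^ n) = 1 := by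
    rw [← ENNReal.ofReal_sum_of_nonneg fun m _ => pow_nonneg (hρ m).1.le n, hsum,
      ENNReal.ofReal_one]
  have hΓ : hutchinson s Γ = Γ := hattr.symm
  obtain ⟨r, hr₀, hr₁, hρr⟩ := exists_nonneg_lt_one_forall_le fun m => (hρ m).2
  have hOΓ : O ⊆ interior Γ := interior_maximal
    (subset_of_openSetCondition hc hvol hopen hr₀ hr₁
      (fun m x y => (hsim m x y).trans_le (by gcongr; exact hρr m)) hΓcomp.isClosed hΓne hΓ.le hO
      hObdd hObdd.measure_lt_top.ne hOsub hOd) hO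
  have hmeas m : MeasurableSet (s m '' Γ) :=
    (hΓcomp.image (continuous_of_dist_eq_mul (hρ m).1.le (hsim m))).measurableSet
  have hd := pairwise_aedisjoint_image_of_hutchinson_eq hc hvol hΓ hΓcomp.measure_lt_top.ne
    fun m => (hmeas m).nullMeasurableSet
  refine ⟨hOne.mono hOΓ, hΓcomp.isBounded.subset interior_subset,
    interior_maximal ((hutchinson_mono s interior_subset).trans hΓ.le)
      (isOpen_hutchinson hopen isOpen_interior), fun m m' hm => ?_⟩
  exact ((hd hm).mono (image_mono interior_subset) (image_mono interior_subset)).disjoint_of_isOpen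
    (hopen m _ isOpen_interior) (hopen m' _ isOpen_interior)

/-- If Γ is an n-attractor with defining IFS s₁,…,s_M then the OSC
holds with O = int Γ: int Γ is a non-empty bounded open set,
⋃ₘ sₘ(int Γ) ⊆ int Γ, and sₘ(int Γ) ∩ sₘ'(int Γ) = ∅ for m ≠ m'. -/
theorem statement5
    (n : ℕ) (hn : 1 ≤ n)
    (M : ℕ) (hM : 2 ≤ M)
    (s : Fin M → EuclideanSpace ℝ (Fin n) → EuclideanSpace ℝ (Fin n))
    (ρ : Fin M → ℝ)
    (hρ : ∀ m, ρ m ∈ Set.Ioo (0 : ℝ) 1)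
    (hsim : ∀ m x y, dist (s m x) (s m y) = ρ m * dist x y)
    (Γ : Set (EuclideanSpace ℝ (Fin n)))
    (hΓne : Γ.Nonempty) (hΓcomp : IsCompact Γ)
    (hattr : Γ = ⋃ m, s m '' Γ)
    (hOSC : ∃ O : Set (EuclideanSpace ℝ (Fin n)), O.Nonempty ∧ IsOpen O ∧
      Bornology.IsBounded O ∧ (⋃ m, s m '' O) ⊆ O ∧
      ∀ m m', m ≠ m' → Disjoint (s m '' O) (s m' '' O))
    (hsum : ∑ m, ρ m ^ n = 1) :
    (interior Γ).Nonempty ∧ Bornology.IsBounded (interior Γ) ∧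
    (⋃ m, s m '' interior Γ) ⊆ interior Γ ∧
    ∀ m m' : Fin M, m ≠ m' → Disjoint (s m '' interior Γ) (s m' '' interior Γ) :=
  statement5_general n M s ρ hρ hsim Γ hΓne hΓcomp hattr hOSC hsum
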